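/- For every real k with 4 < k < 2(1+√5), the half-Mahler measure m⁻(P̃_k) satisfies m⁻(P̃_k) = (1/π) ∫_{k/(2√(k+4))}^{1} log( B̃(t) + √(B̃(t)² + 1) ) · dt/√(1−t²), where B̃(t) = (2t√(k+4) − k)/(2√(k−4)). -/

import Mathlib

open Real MeasureTheory Filter

/-- Complete elliptic integral of the first kind. -/
noncomputable def ellK (z : ℝ) : ℝ :=
  ∫ x in (0:ℝ)..1, 1 / Real.sqrt ((1 - x ^ 2) * (1 - z ^ 2 * x ^ 2))

/-- Complete elliptic integral of the third kind. -/
noncomputable def ellPi (n z : ℝ) : ℝ :=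
  ∫ x in (0:ℝ)..1, 1 / ((1 - n * x ^ 2) * Real.sqrt ((1 - x ^ 2) * (1 - z ^ 2 * x ^ 2)))

/-- Mahler measure of `P_{1,k}(x,y) = x + 1/x + y + 1/y + k`. -/
noncomputable def mahlerP1 (k : ℝ) : ℝ :=
  ∫ θ in (0:ℝ)..1, ∫ φ in (0:ℝ)..1,
    Real.log (Norm.norm (E := ℂ)
      (Complex.exp (2 * Real.pi * Complex.I * θ) +
        (Complex.exp (2 * Real.pi * Complex.I * θ))⁻¹ +
       Complex.exp (2 * Real.pi * Complex.I * φ) +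
        (Complex.exp (2 * Real.pi * Complex.I * φ))⁻¹ + (k : ℂ)))

/-- Mahler measure of `P̃_k(x,y) = √((k+4)/(k−4))·(x + 1/x) + y − 1/y − k/√(k−4)`. -/
noncomputable def mahlerPt (k : ℝ) : ℝ :=
  ∫ θ in (0:ℝ)..1, ∫ φ in (0:ℝ)..1,
    Real.log (Norm.norm (E := ℂ)
      ((Real.sqrt ((k + 4) / (k - 4)) : ℂ) *
        (Complex.exp (2 * Real.pi * Complex.I * θ) +
          (Complex.exp (2 * Real.pi * Complex.I * θ))⁻¹) +
       Complex.exp (2 * Real.pi * Complex.I * φ) -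
        (Complex.exp (2 * Real.pi * Complex.I * φ))⁻¹ -
       ((k / Real.sqrt (k - 4) : ℝ) : ℂ)))

/-- `B_k(e^{2πiθ}) = √((k+4)/(k−4))·2cos(2πθ) − k/√(k−4)`, real on the unit circle. -/
noncomputable def Bt (k θ : ℝ) : ℝ :=
  Real.sqrt ((k + 4) / (k - 4)) * (2 * Real.cos (2 * Real.pi * θ)) - k / Real.sqrt (k - 4)

/-- `y₊(e^{2πiθ}) = (−B + √(B² + 4))/2`. -/
noncomputable def yPlus (k θ : ℝ) : ℝ := (-Bt k θ + Real.sqrt ((Bt k θ) ^ 2 + 4)) / 2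

/-- `y₋(e^{2πiθ}) = (−B − √(B² + 4))/2`. -/
noncomputable def yMinus (k θ : ℝ) : ℝ := (-Bt k θ - Real.sqrt ((Bt k θ) ^ 2 + 4)) / 2

/-- Half-Mahler measure `m⁺(P̃_k) = ∫₀¹ log⁺|y₊(e^{2πiθ})| dθ`. -/
noncomputable def mPlus (k : ℝ) : ℝ := ∫ θ in (0:ℝ)..1, max 0 (Real.log |yPlus k θ|)

/-- Half-Mahler measure `m⁻(P̃_k) = ∫₀¹ log⁺|y₋(e^{2πiθ})| dθ`. -/
noncomputable def mMinus (k : ℝ) : ℝ := ∫ θ in (0:ℝ)..1, max 0 (Real.log |yMinus k θ|)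

/-! On the unit circle `log |y₋| = arsinh (B/2)`, and `B/2 = B̃(cos 2πθ)` where `B̃` is affine and
increasing, vanishing at `t₀ = k/(2√(k+4))`; so `log⁺ |y₋|` is `arsinh ∘ B̃` cut off below `t₀`.
The substitution `t = cos 2πθ` on each half period, `dθ = dt / (2π √(1 - t²))`, turns the
integral over the circle into `(1/π) ∫_{-1}^{1}`, of which only `(t₀, 1)` contributes. -/

open Set

theorem integral_Ioo_comp_cos {E : Type*} [NormedAddCommGroup E] [NormedSpace ℝ E]
    (g : ℝ → E) :
    ∫ θ in Ioo 0 π, g (cos θ) = ∫ t in Ioo (-1) 1, (√(1 - t ^ 2))⁻¹ • g t := by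
  have himage : cos '' Ioo 0 π = Ioo (-1) 1 := by
    simpa using cosPartialHomeomorph.image_source_eq_target
  rw [← himage, integral_image_eq_integral_abs_deriv_smul measurableSet_Ioo
    (fun θ _ => (hasDerivAt_cos θ).hasDerivWithinAt) (by simpa using cosPartialHomeomorph.injOn)]
  refine setIntegral_congr_fun measurableSet_Ioo fun θ hθ => ?_
  have hsin : sin θ ≠ 0 := (sin_pos_of_pos_of_lt_pi hθ.1 hθ.2).ne'
  rw [smul_smul, abs_neg, ← abs_sin_eq_sqrt_one_sub_cos_sq,
    mul_inv_cancel₀ (abs_ne_zero.2 hsin), one_smul]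

theorem integral_comp_cos_two_pi_mul {g : ℝ → ℝ} (hg : Continuous g) :
    ∫ θ in (0:ℝ)..1, g (cos (2 * π * θ)) = π⁻¹ * ∫ t in Ioo (-1) 1, g t / √(1 - t ^ 2) := by
  set f := fun θ => g (cos (2 * π * θ))
  have hf : Continuous f := by fun_prop
  have hreflect : ∫ θ in (1/2:ℝ)..1, f θ = ∫ θ in (0:ℝ)..1/2, f θ := by
    have hsymm : ∀ θ, f (1 - θ) = f θ := fun θ => by
      simp only [f, mul_sub, mul_one, cos_two_pi_sub]
    have h := intervalIntegral.integral_comp_sub_left f (a := 1/2) (b := 1) 1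
    norm_num only [hsymm] at h
    exact h
  have hhalf : ∫ θ in (0:ℝ)..1/2, f θ = (2 * π)⁻¹ * ∫ θ in Ioo 0 π, g (cos θ) := by
    rw [intervalIntegral.integral_comp_mul_left (fun θ => g (cos θ)) (by positivity),
      mul_zero, show 2 * π * (1 / 2) = π by ring, intervalIntegral.integral_of_le pi_pos.le,
      integral_Ioc_eq_integral_Ioo, smul_eq_mul]
  rw [← intervalIntegral.integral_add_adjacent_intervals (hf.intervalIntegrable 0 (1/2))
    (hf.intervalIntegrable (1/2) 1), hreflect, hhalf, integral_Ioo_comp_cos]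
  simp only [smul_eq_mul, inv_mul_eq_div]
  ring

noncomputable def Btilde (k t : ℝ) : ℝ := (2 * t * √(k + 4) - k) / (2 * √(k - 4))

theorem continuous_Btilde (k : ℝ) : Continuous (Btilde k) := by
  unfold Btilde
  fun_prop

theorem Bt_eq_two_mul_Btilde {k : ℝ} (hk : 4 < k) (θ : ℝ) :
    Bt k θ = 2 * Btilde k (cos (2 * π * θ)) := by
  have : 0 < √(k - 4) := sqrt_pos.2 (by linarith)
  rw [Bt, Btilde, sqrt_div (by linarith)]
  field_simp

theorem neg_sub_sqrt_sq_add_four_div_two_eq_neg_exp_arsinh (B : ℝ) :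
    (-B - √(B ^ 2 + 4)) / 2 = -exp (arsinh (B / 2)) := by
  have : √(B ^ 2 + 4) = 2 * √(1 + (B / 2) ^ 2) := by
    rw [show B ^ 2 + 4 = 2 ^ 2 * (1 + (B / 2) ^ 2) by ring, sqrt_mul (by positivity),
      sqrt_sq zero_le_two]
  rw [exp_arsinh, this]
  ring

theorem log_abs_yMinus (k θ : ℝ) : log |yMinus k θ| = arsinh (Bt k θ / 2) := by
  rw [yMinus, neg_sub_sqrt_sq_add_four_div_two_eq_neg_exp_arsinh, abs_neg,
    abs_of_pos (exp_pos _), log_exp]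

theorem mMinus_eq_integral_max_zero_arsinh {k : ℝ} (hk : 4 < k) :
    mMinus k = ∫ θ in (0:ℝ)..1, max 0 (arsinh (Btilde k (cos (2 * π * θ)))) := by
  simp_rw [mMinus, log_abs_yMinus, Bt_eq_two_mul_Btilde hk,
    mul_div_cancel_left₀ _ (two_ne_zero (α := ℝ))]

theorem Btilde_pos_iff {k : ℝ} (hk : 4 < k) {t : ℝ} :
    0 < Btilde k t ↔ k / (2 * √(k + 4)) < t := by
  have : 0 < √(k + 4) := sqrt_pos.2 (by linarith)
  have : 0 < √(k - 4) := sqrt_pos.2 (by linarith)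
  rw [Btilde, lt_div_iff₀ (by positivity), zero_mul, div_lt_iff₀ (by positivity)]
  constructor <;> intro h <;> linarith

theorem max_zero_arsinh_Btilde {k : ℝ} (hk : 4 < k) (t : ℝ) :
    max 0 (arsinh (Btilde k t)) =
      (Ioi (k / (2 * √(k + 4)))).indicator (fun t => arsinh (Btilde k t)) t := by
  by_cases ht : k / (2 * √(k + 4)) < t
  · rw [Set.indicator_of_mem (mem_Ioi.2 ht), max_eq_right]
    exact arsinh_nonneg_iff.2 ((Btilde_pos_iff hk).2 ht).le
  · rw [Set.indicator_of_notMem (notMem_Ioi.2 (not_lt.1 ht)), max_eq_left]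
    exact arsinh_nonpos_iff.2 (not_lt.1 (mt (Btilde_pos_iff hk).1 ht))

theorem div_two_mul_sqrt_add_four_lt_one {k : ℝ} (hk₀ : 0 < k) (hk' : k < 2 * (1 + √5)) :
    k / (2 * √(k + 4)) < 1 := by
  have h5 : √5 ^ 2 = 5 := sq_sqrt (by norm_num)
  rw [div_lt_one (by positivity), ← div_lt_iff₀' two_pos, lt_sqrt (by positivity)]
  have h5' : 1 < √5 := by rw [lt_sqrt zero_le_one]; norm_num
  nlinarith [mul_pos (sub_pos.2 hk') (show 0 < k - 2 + 2 * √5 by linarith)]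

/-- For `4 < k < 2(1+√5)`,
`m⁻(P̃_k) = (1/π) ∫_{k/(2√(k+4))}^{1} log(B̃(t) + √(B̃(t)² + 1)) dt/√(1−t²)`,
where `B̃(t) = (2t√(k+4) − k)/(2√(k−4))`. -/
theorem mMinus_eq_integral (k : ℝ) (hk : 4 < k) (hk' : k < 2 * (1 + Real.sqrt 5)) :
    mMinus k = (1 / Real.pi) *
      ∫ t in (k / (2 * Real.sqrt (k + 4)))..(1:ℝ),
        Real.log ((2 * t * Real.sqrt (k + 4) - k) / (2 * Real.sqrt (k - 4)) +
          Real.sqrt (((2 * t * Real.sqrt (k + 4) - k) / (2 * Real.sqrt (k - 4))) ^ 2 + 1)) /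
        Real.sqrt (1 - t ^ 2) := by
  set t₀ := k / (2 * √(k + 4))
  have ht₀ : 0 < t₀ := by positivity
  have ht₀' : t₀ < 1 := div_two_mul_sqrt_add_four_lt_one (by linarith) hk'
  have hcutoff (t : ℝ) : max 0 (arsinh (Btilde k t)) / √(1 - t ^ 2) =
      (Ioi t₀).indicator (fun t => arsinh (Btilde k t) / √(1 - t ^ 2)) t := by
    simp only [div_eq_mul_inv, Set.indicator_mul_left, max_zero_arsinh_Btilde hk, t₀]
  have hrhs (t : ℝ) : log ((2 * t * √(k + 4) - k) / (2 * √(k - 4)) +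
      √(((2 * t * √(k + 4) - k) / (2 * √(k - 4))) ^ 2 + 1)) = arsinh (Btilde k t) := by
    rw [arsinh, Btilde, add_comm 1]
  rw [mMinus_eq_integral_max_zero_arsinh hk,
    integral_comp_cos_two_pi_mul (g := fun t => max 0 (arsinh (Btilde k t)))
      (continuous_const.max (continuous_arsinh.comp (continuous_Btilde k)))]
  simp_rw [hcutoff, hrhs]
  rw [setIntegral_indicator measurableSet_Ioi, Ioo_inter_Ioi,
    max_eq_right (show -1 ≤ t₀ by linarith), intervalIntegral.integral_of_le ht₀'.le,
    integral_Ioc_eq_integral_Ioo, one_div]
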